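/- Generalized fluctuation relation for the fully tilted operators (Theorem 'genfr'): For a matrix V with the same index set and an antisymmetric r : Fin n → Fin n → ℝ (r i j = −r j i), let T V r be the fully tilted operator with (T V r) i j = V i j * Real.exp (−r i j) for i ≠ j and (T V r) i i = V i i. Let 𝒬 be the antisymmetric matrix with 𝒬 i_μ j_μ = Q μ and 𝒬 j_μ i_μ = −Q μ for every μ, and 𝒬 i j = 0 for all other pairs. Then for every antisymmetric q : Fin n → Fin n → ℝ one has T W (𝒬 − q) = P * (T W̃ q)ᵀ * P⁻¹, where W̃ := P * (M Q)ᵀ * P⁻¹ is the hidden time-reversal generator. -/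

import Mathlib

open Matrix

/-!
Tilting a generator by an antisymmetric matrix `r` multiplies each off-diagonal rate by
`exp (-r i j)`. Tilting is additive in `r`, commutes with conjugation by diagonal matrices and
turns transposition into `r ↦ rᵀ = -r`. Since tilting `W` by the affinity matrix `𝒬` gives
exactly `M Q`, both sides of the fluctuation relation reduce to `M Q` tilted by `-q`.
-/

namespace Matrix

variable {ι : Type*} [DecidableEq ι]

noncomputable def tilt (V : Matrix ι ι ℝ) (r : ι → ι → ℝ) : Matrix ι ι ℝ :=
  of fun i j => if i = j then V i j else V i j * Real.exp (-r i j)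

theorem tilt_apply (V : Matrix ι ι ℝ) (r : ι → ι → ℝ) (i j : ι) :
    tilt V r i j = if i = j then V i j else V i j * Real.exp (-r i j) :=
  rfl

theorem tilt_tilt (V : Matrix ι ι ℝ) (r s : ι → ι → ℝ) :
    tilt (tilt V r) s = tilt V (r + s) := by
  ext i j
  by_cases h : i = j
  · simp [tilt_apply, h]
  · simp only [tilt_apply, if_neg h, Pi.add_apply, neg_add, Real.exp_add]
    ring

theorem transpose_tilt (V : Matrix ι ι ℝ) (r : ι → ι → ℝ) :
    (tilt V r)ᵀ = tilt Vᵀ (fun i j => r j i) := by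
  ext i j
  by_cases h : i = j
  · subst h; simp [tilt_apply]
  · simp [tilt_apply, h, Ne.symm h]

theorem tilt_eq_of_edges {κ : Type*} (V Mq : Matrix ι ι ℝ) (A : ι → ι → ℝ) (ei ej : κ → ι)
    (a : κ → ℝ)
    (hij : ∀ μ, ei μ ≠ ej μ)
    (hM1 : ∀ μ, Mq (ei μ) (ej μ) = V (ei μ) (ej μ) * Real.exp (-a μ))
    (hM2 : ∀ μ, Mq (ej μ) (ei μ) = V (ej μ) (ei μ) * Real.exp (a μ))
    (hM3 : ∀ i j, (∀ μ, ¬(i = ei μ ∧ j = ej μ) ∧ ¬(i = ej μ ∧ j = ei μ)) → Mq i j = V i j)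
    (hA1 : ∀ μ, A (ei μ) (ej μ) = a μ)
    (hA2 : ∀ μ, A (ej μ) (ei μ) = -a μ)
    (hA3 : ∀ i j, (∀ μ, ¬(i = ei μ ∧ j = ej μ) ∧ ¬(i = ej μ ∧ j = ei μ)) → A i j = 0) :
    tilt V A = Mq := by
  ext i j
  by_cases hd : i = j
  · subst hd
    rw [tilt_apply, if_pos rfl]
    exact (hM3 i i fun μ => ⟨fun ⟨h1, h2⟩ => hij μ (h1.symm.trans h2),
      fun ⟨h1, h2⟩ => hij μ (h2.symm.trans h1)⟩).symm
  rw [tilt_apply, if_neg hd]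
  by_cases forward : ∃ μ, i = ei μ ∧ j = ej μ
  · obtain ⟨μ, rfl, rfl⟩ := forward
    rw [hA1, hM1]
  by_cases backward : ∃ μ, i = ej μ ∧ j = ei μ
  · obtain ⟨μ, rfl, rfl⟩ := backward
    rw [hA2, hM2, neg_neg]
  have off : ∀ μ, ¬(i = ei μ ∧ j = ej μ) ∧ ¬(i = ej μ ∧ j = ei μ) :=
    fun μ => ⟨fun h => forward ⟨μ, h⟩, fun h => backward ⟨μ, h⟩⟩
  rw [hA3 i j off, hM3 i j off, neg_zero, Real.exp_zero, mul_one]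

variable [Fintype ι]

theorem tilt_diagonal_mul_mul_diagonal (a b : ι → ℝ) (V : Matrix ι ι ℝ) (r : ι → ι → ℝ) :
    tilt (diagonal a * V * diagonal b) r = diagonal a * tilt V r * diagonal b := by
  ext i j
  by_cases h : i = j
  · simp [tilt_apply, h]
  · simp [tilt_apply, h]
    ring

theorem diagonal_mul_diagonal_inv {p : ι → ℝ} (hp : ∀ i, p i ≠ 0) :
    diagonal p * diagonal p⁻¹ = 1 := by
  rw [diagonal_mul_diagonal, ← diagonal_one]
  exact congrArg diagonal (funext fun i => mul_inv_cancel₀ (hp i))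

theorem inv_diagonal_of_ne_zero {p : ι → ℝ} (hp : ∀ i, p i ≠ 0) :
    (diagonal p)⁻¹ = diagonal p⁻¹ :=
  inv_eq_right_inv (diagonal_mul_diagonal_inv hp)

theorem diagonal_mul_transpose_tilt_conj {p : ι → ℝ} (hp : ∀ i, p i ≠ 0) (V : Matrix ι ι ℝ)
    (r : ι → ι → ℝ) :
    diagonal p * (tilt (diagonal p * Vᵀ * (diagonal p)⁻¹) r)ᵀ * (diagonal p)⁻¹
      = tilt V (fun i j => r j i) := by
  have hcancel := diagonal_mul_diagonal_inv hp
  rw [inv_diagonal_of_ne_zero hp, tilt_diagonal_mul_mul_diagonal, transpose_mul, transpose_mul,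
    diagonal_transpose, diagonal_transpose, transpose_tilt, transpose_transpose]
  simp only [← mul_assoc, hcancel, one_mul]
  rw [mul_assoc, hcancel, mul_one]

end Matrix

theorem generalized_FR_tilted_general {n m : ℕ}
    (W : Matrix (Fin n) (Fin n) ℝ)
    (ei ej : Fin m → Fin n)
    (hij : ∀ μ, ei μ ≠ ej μ)
    (p : Fin n → ℝ) (hp1 : ∀ i, 0 < p i)
    (Q : Fin m → ℝ)
    (M : (Fin m → ℝ) → Matrix (Fin n) (Fin n) ℝ)
    (hM1 : ∀ q μ, M q (ei μ) (ej μ) = W (ei μ) (ej μ) * Real.exp (-q μ))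
    (hM2 : ∀ q μ, M q (ej μ) (ei μ) = W (ej μ) (ei μ) * Real.exp (q μ))
    (hM3 : ∀ q i j, (∀ μ, ¬(i = ei μ ∧ j = ej μ) ∧ ¬(i = ej μ ∧ j = ei μ)) → M q i j = W i j)
    (T : Matrix (Fin n) (Fin n) ℝ → (Fin n → Fin n → ℝ) → Matrix (Fin n) (Fin n) ℝ)
    (hT : ∀ V r i j, T V r i j = if i = j then V i j else V i j * Real.exp (-r i j))
    (QM : Matrix (Fin n) (Fin n) ℝ)
    (hQM1 : ∀ μ, QM (ei μ) (ej μ) = Q μ)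
    (hQM2 : ∀ μ, QM (ej μ) (ei μ) = -Q μ)
    (hQM3 : ∀ i j, (∀ μ, ¬(i = ei μ ∧ j = ej μ) ∧ ¬(i = ej μ ∧ j = ei μ)) → QM i j = 0) :
    ∀ q : Fin n → Fin n → ℝ, (∀ i j, q i j = -q j i) →
      T W (fun i j => QM i j - q i j)
        = Matrix.diagonal p
          * (T (Matrix.diagonal p * (M Q)ᵀ * (Matrix.diagonal p)⁻¹) q)ᵀ
          * (Matrix.diagonal p)⁻¹ := by
  intro q hq
  obtain rfl : T = tilt := funext fun V => funext fun r => ext (hT V r)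
  -- `QM` is eta-expanded because `rw` does not see a `Matrix` as a field `Fin n → Fin n → ℝ`.
  have hMQ : tilt W (fun i j => QM i j) = M Q :=
    tilt_eq_of_edges W (M Q) (fun i j => QM i j) ei ej Q hij (hM1 Q) (hM2 Q) (hM3 Q) hQM1 hQM2 hQM3
  have hq_transpose : (fun i j => q j i) = -q := funext fun i => funext fun j => hq j i
  calc tilt W (fun i j => QM i j - q i j)
      = tilt (tilt W (fun i j => QM i j)) (-q) := by
        rw [tilt_tilt]
        exact congrArg (tilt W) (funext fun i => funext fun j => sub_eq_add_neg _ _)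
    _ = tilt (M Q) (fun i j => q j i) := by rw [hMQ, hq_transpose]
    _ = diagonal p * (tilt (diagonal p * (M Q)ᵀ * (diagonal p)⁻¹) q)ᵀ * (diagonal p)⁻¹ :=
        (diagonal_mul_transpose_tilt_conj (fun i => (hp1 i).ne') (M Q) q).symm

/-- Generalized fluctuation relation for the fully tilted operators (Theorem "genfr"). -/
theorem generalized_FR_tilted {n m : ℕ}
    (W Whid : Matrix (Fin n) (Fin n) ℝ)
    (hW1 : ∀ i j, i ≠ j → 0 ≤ W i j)
    (hW2 : ∀ j, ∑ i, W i j = 0)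
    (ei ej : Fin m → Fin n)
    (hij : ∀ μ, ei μ ≠ ej μ)
    (hdist : ∀ μ ν, μ ≠ ν → ({ei μ, ej μ} : Finset (Fin n)) ≠ {ei ν, ej ν})
    (hpos1 : ∀ μ, 0 < W (ei μ) (ej μ))
    (hpos2 : ∀ μ, 0 < W (ej μ) (ei μ))
    (hH1 : ∀ μ, Whid (ei μ) (ej μ) = 0)
    (hH2 : ∀ μ, Whid (ej μ) (ei μ) = 0)
    (hH3 : ∀ i, Whid i i = W i i
        + ∑ μ ∈ Finset.univ.filter (fun μ => ej μ = i), W (ei μ) (ej μ)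
        + ∑ μ ∈ Finset.univ.filter (fun μ => ei μ = i), W (ej μ) (ei μ))
    (hH4 : ∀ i j, i ≠ j →
      (∀ μ, ¬(i = ei μ ∧ j = ej μ) ∧ ¬(i = ej μ ∧ j = ei μ)) → Whid i j = W i j)
    (p : Fin n → ℝ) (hp1 : ∀ i, 0 < p i) (hp2 : ∑ i, p i = 1)
    (hp3 : Whid *ᵥ p = 0)
    (Q : Fin m → ℝ)
    (hQ : ∀ μ, Q μ = Real.log (W (ei μ) (ej μ) * p (ej μ) / (W (ej μ) (ei μ) * p (ei μ))))
    (M : (Fin m → ℝ) → Matrix (Fin n) (Fin n) ℝ)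
    (hM1 : ∀ q μ, M q (ei μ) (ej μ) = W (ei μ) (ej μ) * Real.exp (-q μ))
    (hM2 : ∀ q μ, M q (ej μ) (ei μ) = W (ej μ) (ei μ) * Real.exp (q μ))
    (hM3 : ∀ q i j, (∀ μ, ¬(i = ei μ ∧ j = ej μ) ∧ ¬(i = ej μ ∧ j = ei μ)) → M q i j = W i j)
    (T : Matrix (Fin n) (Fin n) ℝ → (Fin n → Fin n → ℝ) → Matrix (Fin n) (Fin n) ℝ)
    (hT : ∀ V r i j, T V r i j = if i = j then V i j else V i j * Real.exp (-r i j))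
    (QM : Matrix (Fin n) (Fin n) ℝ)
    (hQM1 : ∀ μ, QM (ei μ) (ej μ) = Q μ)
    (hQM2 : ∀ μ, QM (ej μ) (ei μ) = -Q μ)
    (hQM3 : ∀ i j, (∀ μ, ¬(i = ei μ ∧ j = ej μ) ∧ ¬(i = ej μ ∧ j = ei μ)) → QM i j = 0) :
    ∀ q : Fin n → Fin n → ℝ, (∀ i j, q i j = -q j i) →
      T W (fun i j => QM i j - q i j)
        = Matrix.diagonal p
          * (T (Matrix.diagonal p * (M Q)ᵀ * (Matrix.diagonal p)⁻¹) q)ᵀ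
          * (Matrix.diagonal p)⁻¹ :=
  generalized_FR_tilted_general W ei ej hij p hp1 Q M hM1 hM2 hM3 T hT QM hQM1 hQM2 hQM3
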